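/- arXiv:2401.07351 — 8 statements merged into one kernel-verified Lean document; each statement's English description precedes it below -/
import Mathlib

section
/- Let N > 6 be a composite positive integer. Then there exists a base b with 2 ≤ b ≤ N − 2 such that N is palindromic in base b. Equivalently (Brown's theorem): if N ≥ 2 and N is not palindromic in any base b with 2 ≤ b < N − 1, then N ∈ {3, 4, 6} or N is prime. -/
/-!
Write a composite `N` as `p * d` with `p = N.minFac ≤ d`. If `p + 2 ≤ d`, then in base `d - 1`
we have `N = p * (d - 1) + p` with `p < d - 1`, so `N` has the two digits `p p`. The case
`d = p + 1` forces `p = 2` (one of two consecutive numbers is even), i.e. `N = 6`. If `d = p`,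
then `N = (p - 1)^2 + 2 (p - 1) + 1` reads `1 2 1` in base `p - 1` as soon as `p ≥ 4`; what is
left is `N = 4` and `N = 9 = 1001₂`.
-/

namespace Nat

def HasPalindromicBase (N : ℕ) : Prop :=
  ∃ b, 2 ≤ b ∧ b < N - 1 ∧ (digits b N).Palindrome

theorem digits_mul_succ_of_pos_of_lt {b c : ℕ} (hc : 0 < c) (hcb : c < b) :
    digits b (c * (b + 1)) = [c, c] := by
  rw [show c * (b + 1) = c + b * c by ring, digits_add b (by omega) c c hcb (by omega),
    digits_of_lt b c hc.ne' hcb]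

theorem digits_succ_sq {b : ℕ} (hb : 2 < b) : digits b ((b + 1) ^ 2) = [1, 2, 1] := by
  rw [show (b + 1) ^ 2 = 1 + b * (2 + b * 1) by ring, digits_add b (by omega) 1 _ (by omega)
    (by omega), digits_add b (by omega) 2 1 hb (by omega), digits_of_lt b 1 one_ne_zero (by omega)]

theorem hasPalindromicBase_mul {c d : ℕ} (hc : 2 ≤ c) (hcd : c + 2 ≤ d) :
    HasPalindromicBase (c * d) := by
  obtain ⟨b, rfl⟩ : ∃ b, d = b + 1 := ⟨d - 1, by omega⟩
  have : 2 * (b + 1) ≤ c * (b + 1) := Nat.mul_le_mul_right _ hc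
  refine ⟨b, by omega, by omega, ?_⟩
  rw [digits_mul_succ_of_pos_of_lt (by omega) (by omega)]
  exact .of_reverse_eq rfl

theorem hasPalindromicBase_sq {p : ℕ} (hp : 3 ≤ p) : HasPalindromicBase (p ^ 2) := by
  obtain rfl | hp : p = 3 ∨ 4 ≤ p := by omega
  · exact ⟨2, le_rfl, by norm_num, by norm_num; exact .of_reverse_eq rfl⟩
  obtain ⟨b, rfl⟩ : ∃ b, p = b + 1 := ⟨p - 1, by omega⟩
  have : 4 * (b + 1) ≤ (b + 1) ^ 2 := sq (b + 1) ▸ Nat.mul_le_mul_right _ hp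
  refine ⟨b, by omega, by omega, ?_⟩
  rw [digits_succ_sq (by omega)]
  exact .of_reverse_eq rfl

theorem hasPalindromicBase_of_not_prime {N : ℕ} (hN : 2 ≤ N) (hprime : ¬ N.Prime)
    (h4 : N ≠ 4) (h6 : N ≠ 6) : HasPalindromicBase N := by
  have hp2 : 2 ≤ N.minFac := (minFac_prime (by omega)).two_le
  have hp_sq := minFac_sq_le_self (by omega) hprime
  have hp_min : ∀ m, 2 ≤ m → m ∣ N → N.minFac ≤ m := fun m hm hmN => minFac_le_of_dvd hm hmN
  obtain ⟨d, hNpd⟩ := minFac_dvd N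
  generalize N.minFac = p at *
  subst hNpd
  have hpd : p ≤ d := Nat.le_of_mul_le_mul_left (sq p ▸ hp_sq) (by omega)
  obtain rfl | rfl | hpd : p = d ∨ d = p + 1 ∨ p + 2 ≤ d := by omega
  · obtain rfl | hp3 : p = 2 ∨ 3 ≤ p := by omega
    · exact absurd rfl h4
    rw [← sq]
    exact hasPalindromicBase_sq hp3
  · have := hp_min 2 le_rfl (even_iff_two_dvd.mp (even_mul_succ_self p))
    obtain rfl : p = 2 := by omega
    exact absurd rfl h6
  · exact hasPalindromicBase_mul hp2 hpd

end Nat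

/-- Brown's theorem: if `N ≥ 2` is not palindromic in any base `b` with
`2 ≤ b < N - 1`, then `N ∈ {3, 4, 6}` or `N` is prime. -/
theorem brown_min_base (N : ℕ) (hN : 2 ≤ N)
    (h : ∀ b : ℕ, 2 ≤ b → b < N - 1 → ¬ List.Palindrome (Nat.digits b N)) :
    N = 3 ∨ N = 4 ∨ N = 6 ∨ N.Prime := by
  by_contra! hcon
  obtain ⟨-, h4, h6, hprime⟩ := hcon
  obtain ⟨b, hb2, hbN, hpal⟩ := Nat.hasPalindromicBase_of_not_prime hN hprime h4 h6
  exact h b hb2 hbN hpal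
end

section
/- Let b ≥ 2, k ≥ 0 and α ≥ 1 be integers with α · C(k, ⌈k/2⌉) < b, where C denotes the binomial coefficient. Then the base-b digit list of N = α·(1+b)^k is [α·C(k,0), α·C(k,1), ..., α·C(k,k)] (little-endian), i.e., N has the binomial-form representation α·(C(k,k), ..., C(k,1), C(k,0)) in base b; in particular N is palindromic in base b. -/
/-!
Expanding `(1 + b) ^ k` by the binomial theorem writes `α * (1 + b) ^ k` as `∑ α * C(k, i) * b ^ i`.
Every coefficient is at most the central one `α * C(k, ⌈k/2⌉) < b`, so these coefficients are
already the base-`b` digits, and their list is a palindrome by `C(k, k - i) = C(k, i)`.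
-/

namespace Nat

theorem choose_le_choose_succ_div_two (k i : ℕ) : k.choose i ≤ k.choose ((k + 1) / 2) := by
  rw [← choose_symm (by omega : (k + 1) / 2 ≤ k), show k - (k + 1) / 2 = k / 2 by omega]
  exact choose_le_middle i k

theorem ofDigits_map_range (b : ℕ) (f : ℕ → ℕ) (n : ℕ) :
    ofDigits b ((List.range n).map f) = ∑ i ∈ Finset.range n, f i * b ^ i := by
  induction n with
  | zero => simp
  | succ n ih =>
    rw [List.range_succ, List.map_append, ofDigits_append, ih, Finset.sum_range_succ]
    simp [mul_comm]

theorem ofDigits_map_range_mul_choose (b k α : ℕ) :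
    ofDigits b ((List.range (k + 1)).map (fun i => α * k.choose i)) = α * (1 + b) ^ k := by
  rw [ofDigits_map_range, add_comm 1 b, add_pow, Finset.mul_sum]
  refine Finset.sum_congr rfl fun i _ => ?_
  rw [one_pow, Nat.cast_id]
  ring

end Nat

theorem List.palindrome_map_range_succ {α : Type*} (f : ℕ → α) (k : ℕ)
    (hf : ∀ i ≤ k, f (k - i) = f i) : ((List.range (k + 1)).map f).Palindrome := by
  refine .of_reverse_eq ?_
  rw [← List.map_reverse, List.range_eq_range', List.reverse_range', List.map_map,
    ← List.range_eq_range']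
  refine List.map_congr_left fun i hi => ?_
  simpa using hf i (by simpa [Nat.lt_succ_iff] using hi)

theorem binomial_form_digits_general (b k α : ℕ) (hα : 1 ≤ α)
    (h : α * Nat.choose k ((k + 1) / 2) < b) :
    Nat.digits b (α * (1 + b) ^ k)
        = (List.range (k + 1)).map (fun i => α * Nat.choose k i) ∧
      List.Palindrome (Nat.digits b (α * (1 + b) ^ k)) := by
  have hdigit : ∀ i, α * k.choose i < b := fun i =>
    (Nat.mul_le_mul_left α (Nat.choose_le_choose_succ_div_two k i)).trans_lt h
  have hb : 1 < b := hα.trans_lt (by simpa using hdigit 0)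
  have hdigits : Nat.digits b (α * (1 + b) ^ k)
      = (List.range (k + 1)).map (fun i => α * k.choose i) := by
    rw [← Nat.ofDigits_map_range_mul_choose b k α]
    refine Nat.digits_ofDigits b hb _ ?_ ?_
    · simp only [List.mem_map, List.mem_range]
      rintro _ ⟨i, -, rfl⟩
      exact hdigit i
    · intro _
      simp only [List.getLast_map, List.getLast_range, add_tsub_cancel_right, Nat.choose_self,
        mul_one]
      omega
  refine ⟨hdigits, hdigits ▸ List.palindrome_map_range_succ _ k fun i hi => ?_⟩
  rw [Nat.choose_symm hi]

/-- If `α * C(k, ⌈k/2⌉) < b` (with `b ≥ 2`, `α ≥ 1`), then the base-`b` digit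
list of `N = α * (1 + b) ^ k` is `[α*C(k,0), α*C(k,1), ..., α*C(k,k)]`
(little-endian); in particular `N` is palindromic in base `b`. -/
theorem binomial_form_digits (b k α : ℕ) (hb : 2 ≤ b) (hα : 1 ≤ α)
    (h : α * Nat.choose k ((k + 1) / 2) < b) :
    Nat.digits b (α * (1 + b) ^ k)
        = (List.range (k + 1)).map (fun i => α * Nat.choose k i) ∧
      List.Palindrome (Nat.digits b (α * (1 + b) ^ k)) :=
  binomial_form_digits_general b k α hα h
end

section
/- Let b ≥ 2 and n ≥ 0 be integers. If the base-b digit list of 2^n is a palindrome with an even number of digits, then b = 2^x − 1 for some integer x. -/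
theorem List.alternatingSum_eq_zero_of_palindrome {l : List ℤ} (p : l.Palindrome)
    (h : Even l.length) : l.alternatingSum = 0 := by
  have := l.alternatingSum_reverse
  rw [p.reverse_eq, pow_succ', h.neg_one_pow, mul_one, neg_one_zsmul] at this
  exact eq_zero_of_neg_eq this.symm

namespace Nat

/-- Since `b ≡ -1 [MOD b + 1]`, `n` is congruent to the alternating sum of its base-`b` digits,
which vanishes for an even-length palindrome. -/
theorem succ_dvd_of_palindrome_digits {b n : ℕ} (p : (digits b n).Palindrome)
    (h : Even (digits b n).length) : b + 1 ∣ n := by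
  rw [dvd_iff_dvd_ofDigits (b + 1) b (-1) (by simp), ofDigits_neg_one]
  refine ⟨0, ?_⟩
  rw [mul_zero]
  exact List.alternatingSum_eq_zero_of_palindrome (p.map _) (by rwa [List.length_map])

end Nat

theorem base_eq_pow_two_sub_one_of_palindrome_even_length_general (b n : ℕ)
    (hpal : List.Palindrome (Nat.digits b (2 ^ n)))
    (hlen : Even (Nat.digits b (2 ^ n)).length) :
    ∃ x : ℕ, b = 2 ^ x - 1 := by
  obtain ⟨x, -, hx⟩ :=
    (Nat.dvd_prime_pow Nat.prime_two).mp (Nat.succ_dvd_of_palindrome_digits hpal hlen)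
  exact ⟨x, by omega⟩

/-- If the base-`b` digit list of `2^n` is a palindrome with an even number of
digits, then `b = 2^x - 1` for some `x`. -/
theorem base_eq_pow_two_sub_one_of_palindrome_even_length (b n : ℕ) (hb : 2 ≤ b)
    (hpal : List.Palindrome (Nat.digits b (2 ^ n)))
    (hlen : Even (Nat.digits b (2 ^ n)).length) :
    ∃ x : ℕ, b = 2 ^ x - 1 :=
  base_eq_pow_two_sub_one_of_palindrome_even_length_general b n hpal hlen
end

section
/- Let p be a prime and let n ≥ 0, b ≥ 2 be integers. If the base-b digit list of p^n is a palindrome with an even number of digits, then b = p^x − 1 for some integer x. -/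
/-! Since `b ≡ -1 [MOD b + 1]`, a number is congruent modulo `b + 1` to the alternating sum of its
base-`b` digits, and that sum vanishes for a palindrome of even length. So `b + 1` divides `p ^ n`,
and the divisors of a prime power are prime powers. -/

theorem List.Palindrome.alternatingSum_eq_zero {α : Type*} [AddCommGroup α] [IsAddTorsionFree α]
    {l : List α} (hl : l.Palindrome) (he : Even l.length) : l.alternatingSum = 0 := by
  have h := l.alternatingSum_reverse
  rw [hl.reverse_eq, pow_succ', he.neg_one_pow, mul_one, neg_one_zsmul] at h
  rw [← two_nsmul_eq_zero, two_nsmul]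
  nth_rewrite 1 [h]
  exact neg_add_cancel _

theorem Nat.succ_dvd_of_digits_palindrome {b m : ℕ} (hpal : (digits b m).Palindrome)
    (hlen : Even (digits b m).length) : b + 1 ∣ m := by
  refine (dvd_iff_dvd_ofDigits (b + 1) b (-1) (by simp) m).2 ?_
  rw [ofDigits_neg_one]
  exact ⟨0, by simpa using (hpal.map _).alternatingSum_eq_zero (by simpa using hlen)⟩

theorem base_eq_pow_prime_sub_one_of_palindrome_even_length_general (p b n : ℕ)
    (hp : p.Prime)
    (hpal : List.Palindrome (Nat.digits b (p ^ n)))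
    (hlen : Even (Nat.digits b (p ^ n)).length) :
    ∃ x : ℕ, b = p ^ x - 1 := by
  obtain ⟨x, -, hx⟩ := (Nat.dvd_prime_pow hp).mp (Nat.succ_dvd_of_digits_palindrome hpal hlen)
  exact ⟨x, by omega⟩

/-- If `p` is prime and the base-`b` digit list of `p^n` is a palindrome with
an even number of digits, then `b = p^x - 1` for some `x`. -/
theorem base_eq_pow_prime_sub_one_of_palindrome_even_length (p b n : ℕ)
    (hp : p.Prime) (hb : 2 ≤ b)
    (hpal : List.Palindrome (Nat.digits b (p ^ n)))
    (hlen : Even (Nat.digits b (p ^ n)).length) :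
    ∃ x : ℕ, b = p ^ x - 1 :=
  base_eq_pow_prime_sub_one_of_palindrome_even_length_general p b n hp hpal hlen
end

section
/- Let n ≥ 1, b ≥ 2 and α ≥ 1 be integers. Then 2^n has the 3-digit binomial-form representation α·(1,2,1)_b, i.e., 2^n = α·(1 + b)² with 2α ≤ b − 1, if and only if there exists an integer i ≥ 0 with α = 2^i, n ≡ i (mod 2), 3i + 2 < n, and b = 2^{(n−i)/2} − 1. -/
/-! Both `α` and `1 + b` divide `2 ^ n`, so `α = 2 ^ i`, `1 + b = 2 ^ j` and `n = i + 2 j`. The digit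
condition `2α ≤ b - 1` then reads `2 ^ (i + 1) + 2 ≤ 2 ^ j`, i.e. `i + 2 ≤ j`, which is `3 i + 2 < n`. -/

theorem Nat.mul_sq_eq_prime_pow_iff {p a c n : ℕ} (hp : p.Prime) :
    a * c ^ 2 = p ^ n ↔ ∃ i j, a = p ^ i ∧ c = p ^ j ∧ n = i + 2 * j := by
  constructor
  · intro h
    have hc : c ∣ p ^ n := ⟨a * c, by rw [← h]; ring⟩
    obtain ⟨i, -, rfl⟩ := (Nat.dvd_prime_pow hp).1 (Dvd.intro _ h)
    obtain ⟨j, -, rfl⟩ := (Nat.dvd_prime_pow hp).1 hc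
    refine ⟨i, j, rfl, rfl, Nat.pow_right_injective hp.two_le ?_⟩
    simp only [← h, pow_add, pow_mul']
  · rintro ⟨i, j, rfl, rfl, rfl⟩
    ring

theorem Nat.two_mul_two_pow_add_two_le_two_pow_iff {i j : ℕ} :
    2 * 2 ^ i + 2 ≤ 2 ^ j ↔ i + 2 ≤ j := by
  have hi : 1 ≤ 2 ^ i := Nat.one_le_two_pow
  constructor
  · intro h
    have hlt : 2 ^ (i + 1) < 2 ^ j := by rw [pow_succ]; omega
    have := (Nat.pow_lt_pow_iff_right (by norm_num)).1 hlt
    omega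
  · intro h
    have := Nat.pow_le_pow_right (by norm_num : 0 < 2) h
    rw [pow_add] at this
    omega

theorem three_digit_binomial_form_iff_general (n b α : ℕ) :
    (2 ^ n = α * (1 + b) ^ 2 ∧ 2 * α ≤ b - 1) ↔
      (∃ i : ℕ, α = 2 ^ i ∧ n % 2 = i % 2 ∧ 3 * i + 2 < n ∧
        b = 2 ^ ((n - i) / 2) - 1) := by
  rw [eq_comm, Nat.mul_sq_eq_prime_pow_iff Nat.prime_two]
  constructor
  · rintro ⟨⟨i, j, rfl, hb, rfl⟩, hdigit⟩
    have hi : 1 ≤ 2 ^ i := Nat.one_le_two_pow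
    have hij : i + 2 ≤ j := Nat.two_mul_two_pow_add_two_le_two_pow_iff.1 (by omega)
    refine ⟨i, rfl, by omega, by omega, ?_⟩
    rw [show (i + 2 * j - i) / 2 = j by omega]
    omega
  · rintro ⟨i, rfl, hparity, hlt, rfl⟩
    set j := (n - i) / 2
    have hj : 1 ≤ 2 ^ j := Nat.one_le_two_pow
    have hdigit : 2 * 2 ^ i + 2 ≤ 2 ^ j := Nat.two_mul_two_pow_add_two_le_two_pow_iff.2 (by omega)
    refine ⟨⟨i, j, rfl, ?_, ?_⟩, ?_⟩ <;> omega

/-- `2^n` has the 3-digit binomial-form representation `α·(1,2,1)_b`, i.e.,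
`2^n = α(1+b)²` with `2α ≤ b - 1`, if and only if there is `i ≥ 0` with
`α = 2^i`, `n ≡ i (mod 2)`, `3i + 2 < n`, and `b = 2^((n-i)/2) - 1`. -/
theorem three_digit_binomial_form_iff (n b α : ℕ) (hn : 1 ≤ n) (hb : 2 ≤ b)
    (hα : 1 ≤ α) :
    (2 ^ n = α * (1 + b) ^ 2 ∧ 2 * α ≤ b - 1) ↔
      (∃ i : ℕ, α = 2 ^ i ∧ n % 2 = i % 2 ∧ 3 * i + 2 < n ∧
        b = 2 ^ ((n - i) / 2) - 1) :=
  three_digit_binomial_form_iff_general n b α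
end

section
/- For every integer n ≥ 2 there exist integers x, k ≥ 1 and r ≥ 0 with x ≤ ⌈√(2n)⌉ + 1, n = k·x + r, and such that the base-(2^x − 1) digit list of 2^n is [2^r·C(k,0), 2^r·C(k,1), ..., 2^r·C(k,k)]. In particular, 2^n has a binomial-form (hence palindromic) representation in some base b ≤ 2^y − 1 with y ≤ ⌈√(2n)⌉ + 1. -/
/-!
Write `n = k x + r` and put `b = 2^x - 1`. Then `2^n = 2^r (b + 1)^k = ∑ 2^r C(k,i) b^i`, and this
is the base-`b` expansion as soon as every coefficient `2^r C(k,i) ≤ 2^(r+k-1)` is a digit, which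
holds when `r + k ≤ x`. Taking `k` maximal with `k(2k-1) ≤ n`, `x = n / k` and `r = n % k` gives
`2k - 1 ≤ x ≤ 2k + 3` and `r < k`, so `r + k ≤ x`, and `k x ≤ n` forces `(x - 2)^2 < 2n`.
-/

open Finset

theorem Nat.ofDigits_map_range_s15 (b m : ℕ) (f : ℕ → ℕ) :
    Nat.ofDigits b ((List.range m).map f) = ∑ i ∈ range m, f i * b ^ i := by
  induction m with
  | zero => simp
  | succ m ih =>
    rw [List.range_succ, List.map_append, Nat.ofDigits_append, ih, sum_range_succ]
    simp [Nat.mul_comm]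

theorem Nat.digits_mul_succ_pow {b c k : ℕ} (hb : 1 < b) (hc : c ≠ 0)
    (hdigit : ∀ i ≤ k, c * k.choose i < b) :
    Nat.digits b (c * (b + 1) ^ k) = (List.range (k + 1)).map (fun i => c * k.choose i) := by
  have hexpand : Nat.ofDigits b ((List.range (k + 1)).map (fun i => c * k.choose i))
      = c * (b + 1) ^ k := by
    rw [Nat.ofDigits_map_range_s15, add_pow, mul_sum]
    refine sum_congr rfl fun i _ => ?_
    rw [one_pow, mul_one, Nat.cast_id]
    ring
  rw [← hexpand, Nat.digits_ofDigits _ hb]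
  · simp only [List.mem_map, List.mem_range]
    rintro _ ⟨i, hi, rfl⟩
    exact hdigit i (Nat.lt_succ_iff.mp hi)
  · intro _
    simp [List.getLast_eq_getElem, hc]

theorem Nat.digits_two_pow_mersenne {x k r : ℕ} (hx : 2 ≤ x) (hk : 1 ≤ k) (hrk : r + k ≤ x) :
    Nat.digits (2 ^ x - 1) (2 ^ (k * x + r))
      = (List.range (k + 1)).map (fun i => 2 ^ r * k.choose i) := by
  have hpow : 4 ≤ 2 ^ x := by
    calc 4 = 2 ^ 2 := rfl
      _ ≤ 2 ^ x := Nat.pow_le_pow_right two_pos hx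
  have hsucc : 2 ^ x - 1 + 1 = 2 ^ x := by omega
  have hdigit : ∀ i ≤ k, 2 ^ r * k.choose i < 2 ^ x - 1 := by
    intro i _
    obtain ⟨m, rfl⟩ : ∃ m, k = m + 1 := ⟨k - 1, by omega⟩
    have hhalf : 2 * 2 ^ (x - 1) = 2 ^ x := by rw [← pow_succ']; congr 1; omega
    have hlarge : 2 ≤ 2 ^ (x - 1) := by
      calc 2 = 2 ^ 1 := rfl
        _ ≤ 2 ^ (x - 1) := Nat.pow_le_pow_right two_pos (by omega)
    calc 2 ^ r * (m + 1).choose i ≤ 2 ^ r * 2 ^ m :=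
          Nat.mul_le_mul_left _ (Nat.choose_succ_le_two_pow m i)
      _ = 2 ^ (r + m) := (pow_add 2 r m).symm
      _ ≤ 2 ^ (x - 1) := Nat.pow_le_pow_right two_pos (by omega)
      _ < 2 ^ x - 1 := by omega
  have hexpand : 2 ^ (k * x + r) = 2 ^ r * (2 ^ x - 1 + 1) ^ k := by
    rw [hsucc, ← pow_mul, ← pow_add]
    ring
  rw [hexpand]
  exact Nat.digits_mul_succ_pow (by omega) (by positivity) hdigit

theorem exists_le_mul_two_mul_sub_one_lt {n : ℕ} (hn : 1 ≤ n) :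
    ∃ k, 1 ≤ k ∧ k * (2 * k - 1) ≤ n ∧ n < (k + 1) * (2 * k + 1) := by
  induction n, hn using Nat.le_induction with
  | base => exact ⟨1, le_rfl, by norm_num, by norm_num⟩
  | succ n _ ih =>
    obtain ⟨k, hk, hlow, hhigh⟩ := ih
    by_cases hnext : n + 1 < (k + 1) * (2 * k + 1)
    · exact ⟨k, hk, by omega, hnext⟩
    · refine ⟨k + 1, by omega, ?_, ?_⟩
      · have : 2 * (k + 1) - 1 = 2 * k + 1 := by omega
        rw [this]; omega
      · have : 2 * (k + 1) + 1 = 2 * k + 3 := by ring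
        nlinarith

theorem lt_ceil_sqrt_of_sq_lt {m N : ℕ} (h : m ^ 2 < N) : m < ⌈Real.sqrt N⌉₊ := by
  rw [Nat.lt_ceil]
  exact Real.lt_sqrt_of_sq_lt (by exact_mod_cast h)

/-- For all `n ≥ 2`, `2^n` has a base-`(2^x - 1)` binomial-form representation
for some `x ≤ ⌈√(2n)⌉ + 1`. -/
theorem binomial_form_small_base (n : ℕ) (hn : 2 ≤ n) :
    ∃ x k r : ℕ, 1 ≤ x ∧ 1 ≤ k ∧
      x ≤ ⌈Real.sqrt (2 * n)⌉₊ + 1 ∧ n = k * x + r ∧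
      Nat.digits (2 ^ x - 1) (2 ^ n)
        = (List.range (k + 1)).map (fun i => 2 ^ r * Nat.choose k i) := by
  obtain ⟨k, hk, hlow, hhigh⟩ := exists_le_mul_two_mul_sub_one_lt (by omega : 1 ≤ n)
  have hdiv : n = k * (n / k) + n % k := (Nat.div_add_mod n k).symm
  have hmod : n % k < k := Nat.mod_lt n hk
  have hxlow : 2 * k - 1 ≤ n / k := (Nat.le_div_iff_mul_le hk).mpr (by rw [mul_comm]; exact hlow)
  have hxhigh : n / k < 2 * k + 4 := (Nat.div_lt_iff_lt_mul hk).mpr (by nlinarith)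
  have hx : 2 ≤ n / k := by
    rcases Nat.eq_or_lt_of_le hk with rfl | hk_gt
    · simpa using hn
    · omega
  have hsq : (n / k - 2) ^ 2 < 2 * n := by
    obtain ⟨y, hy⟩ : ∃ y, n / k = y + 2 := ⟨n / k - 2, by omega⟩
    have hkx : k * (y + 2) ≤ n := hy ▸ Nat.mul_div_le n k
    rw [hy, Nat.add_sub_cancel]
    nlinarith [Nat.mul_le_mul_left y (show y ≤ 2 * k + 1 by omega)]
  have hceil := lt_ceil_sqrt_of_sq_lt hsq
  push_cast at hceil
  refine ⟨n / k, k, n % k, by omega, hk, by omega, hdiv, ?_⟩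
  rw [← Nat.digits_two_pow_mersenne hx hk (by omega), ← hdiv]
end

section
/- For every integer m ≥ 1, the central binomial coefficient satisfies C(2m, m) < 4^m / √(π·m). -/
/-!
Wallis' partial products satisfy `W m = 16^m / ((2m+1) C(2m,m)^2)`, and the sine-integral
comparison behind Wallis' formula gives `W m ≥ (2m+1)/(2m+2) · π/2`. Since
`(2m+1)^2 > 4m(m+1)`, this yields `π m C(2m,m)^2 < 16^m`; take square roots.
-/

open Real Nat

namespace Real.Wallis

theorem W_mul_mul_centralBinom_sq (n : ℕ) :
    W n * (2 * n + 1) * (centralBinom n : ℝ) ^ 2 = (4 ^ n) ^ 2 := by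
  have hfact : (centralBinom n : ℝ) * (n ! * n !) = (2 * n)! := by
    have h := choose_mul_factorial_mul_factorial (by omega : n ≤ 2 * n)
    rw [show 2 * n - n = n by omega, mul_assoc] at h
    exact_mod_cast h
  have hC : (centralBinom n : ℝ) ≠ 0 := by exact_mod_cast (centralBinom_pos n).ne'
  have hpow : (2 : ℝ) ^ (4 * n) = (4 ^ n) ^ 2 := by
    rw [show (4 : ℝ) = 2 ^ 2 by norm_num, ← pow_mul, ← pow_mul]
    ring_nf
  rw [W_eq_factorial_ratio, ← hfact, hpow]
  field_simp

theorem pi_mul_lt_W_mul (n : ℕ) : π * n < W n * (2 * n + 1) := by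
  calc π * n < π * (2 * n + 1) ^ 2 / (4 * (n + 1)) := by
        rw [lt_div_iff₀ (by positivity)]
        nlinarith [pi_pos]
    _ = (2 * n + 1) / (2 * n + 2) * (π / 2) * (2 * n + 1) := by
        field_simp
        ring
    _ ≤ W n * (2 * n + 1) := by gcongr; exact le_W n

end Real.Wallis

theorem Nat.pi_mul_mul_centralBinom_sq_lt (n : ℕ) :
    π * n * (centralBinom n : ℝ) ^ 2 < (4 ^ n) ^ 2 := by
  rw [← Real.Wallis.W_mul_mul_centralBinom_sq]
  have hC : (0 : ℝ) < centralBinom n := by exact_mod_cast centralBinom_pos n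
  exact mul_lt_mul_of_pos_right (Real.Wallis.pi_mul_lt_W_mul n) (by positivity)

open Real in
/-- For every integer `m ≥ 1`, `C(2m, m) < 4^m / √(π·m)`. -/
theorem centralBinom_lt (m : ℕ) (hm : 1 ≤ m) :
    (Nat.centralBinom m : ℝ) < 4 ^ m / Real.sqrt (π * m) := by
  have hpm : 0 < π * m := mul_pos pi_pos (by exact_mod_cast hm)
  rw [lt_div_iff₀ (sqrt_pos.mpr hpm)]
  refine lt_of_pow_lt_pow_left₀ 2 (by positivity) ?_
  rw [mul_pow, sq_sqrt hpm.le, mul_comm]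
  exact Nat.pi_mul_mul_centralBinom_sq_lt m
end

section
/- For every integer k ≥ 1, the middle binomial coefficient satisfies C(k, ⌈k/2⌉) < 2^k / √π. -/
/-!
Wallis' product `W n = ∏_{i<n} (2i+2)²/((2i+1)(2i+3))` equals `16ⁿ / (C(2n, n)² (2n+1))`, and its
lower bound `W n ≥ (2n+1)/(2n+2) · π/2` therefore gives `C(2n, n)² ≤ 16ⁿ/π · (4n+4)/(2n+1)²`,
which is strictly below `16ⁿ/π` as soon as `n ≥ 1`. This settles even `k = 2n`; for odd `k = 2n - 1`
the middle coefficient is exactly half of `C(2n, n)`.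
-/

open Real Nat

namespace Real.Wallis

theorem W_eq_centralBinom (n : ℕ) :
    W n = 16 ^ n / ((n.centralBinom : ℝ) ^ 2 * (2 * n + 1)) := by
  have hfact : ((n.centralBinom * n ! * n ! : ℕ) : ℝ) = (2 * n)! := by
    rw [centralBinom_eq_two_mul_choose, ← choose_mul_factorial_mul_factorial (by omega : n ≤ 2 * n),
      show 2 * n - n = n by omega]
  push_cast at hfact
  have hn : (n ! : ℝ) ≠ 0 := by positivity
  rw [W_eq_factorial_ratio, ← hfact, pow_mul, show (2 : ℝ) ^ 4 = 16 by norm_num]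
  field_simp

end Real.Wallis

namespace Nat

theorem centralBinom_sq_lt {n : ℕ} (hn : n ≠ 0) : (n.centralBinom : ℝ) ^ 2 < 16 ^ n / π := by
  have hC : (0 : ℝ) < n.centralBinom := by exact_mod_cast centralBinom_pos n
  have hwallis := Real.Wallis.le_W n
  rw [Real.Wallis.W_eq_centralBinom, le_div_iff₀ (by positivity)] at hwallis
  have hcleared : π * (n.centralBinom : ℝ) ^ 2 * (2 * n + 1) ^ 2 ≤ 16 ^ n * (4 * n + 4) := by
    have hrearrange : (2 * n + 1) / (2 * n + 2) * (π / 2) * ((n.centralBinom : ℝ) ^ 2 * (2 * n + 1))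
        = π * (n.centralBinom : ℝ) ^ 2 * (2 * n + 1) ^ 2 / (4 * n + 4) := by
      field_simp
      ring
    rwa [hrearrange, div_le_iff₀ (by positivity)] at hwallis
  have hn_one : (1 : ℝ) ≤ n := by exact_mod_cast Nat.one_le_iff_ne_zero.mpr hn
  have hfactor : (4 * n + 4 : ℝ) < (2 * n + 1) ^ 2 := by nlinarith
  rw [lt_div_iff₀ pi_pos]
  nlinarith [pow_pos (by norm_num : (0 : ℝ) < 16) n]

theorem centralBinom_lt_four_pow_div_sqrt_pi {n : ℕ} (hn : n ≠ 0) :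
    (n.centralBinom : ℝ) < 4 ^ n / √π := by
  have hsq : (4 ^ n / √π : ℝ) ^ 2 = 16 ^ n / π := by
    rw [div_pow, sq_sqrt pi_pos.le, ← pow_mul, mul_comm, pow_mul]
    norm_num
  exact lt_of_pow_lt_pow_left₀ 2 (by positivity) (hsq ▸ centralBinom_sq_lt hn)

theorem two_mul_choose_odd_succ_half (n : ℕ) :
    2 * (2 * n + 1).choose (n + 1) = (n + 1).centralBinom := by
  rw [centralBinom_eq_two_mul_choose, show 2 * (n + 1) = 2 * n + 1 + 1 by ring,
    choose_succ_succ (2 * n + 1) n, choose_symm_half]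
  ring

end Nat

open Real in
/-- For every integer `k ≥ 1`, `C(k, ⌈k/2⌉) < 2^k / √π`. -/
theorem middle_binom_lt (k : ℕ) (hk : 1 ≤ k) :
    (Nat.choose k ((k + 1) / 2) : ℝ) < 2 ^ k / Real.sqrt π := by
  rcases Nat.even_or_odd' k with ⟨n, rfl | rfl⟩
  · have hmiddle : (2 * n + 1) / 2 = n := by omega
    rw [hmiddle, ← centralBinom_eq_two_mul_choose, pow_mul, show (2 : ℝ) ^ 2 = 4 by norm_num]
    exact centralBinom_lt_four_pow_div_sqrt_pi (by omega)
  · have hmiddle : (2 * n + 1 + 1) / 2 = n + 1 := by omega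
    have hhalf : ((2 * n + 1).choose (n + 1) : ℝ) = (n + 1).centralBinom / 2 := by
      rw [← two_mul_choose_odd_succ_half]
      push_cast
      ring
    have hpow : (2 : ℝ) ^ (2 * n + 1) = 4 ^ (n + 1) / 2 := by
      rw [pow_succ, pow_mul]
      ring
    rw [hmiddle, hhalf, hpow, div_right_comm]
    exact div_lt_div_of_pos_right (centralBinom_lt_four_pow_div_sqrt_pi (succ_ne_zero n)) two_pos
end
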